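/- arXiv:2103.07165 — 3 statements merged into one kernel-verified Lean document; each statement's English description precedes it below -/
import Mathlib

section
/- Let d ≥ 1, let B be an invertible d×d real matrix with operator norm ‖B‖, let η ∈ ℝ^d, and let f : ℝ^d → ℝ^d be continuously differentiable and Lipschitz with constant L_f, with ∂f^i/∂x_i(x) ≥ K for all x ∈ ℝ^d and all i = 1,…,d. Then for every continuously differentiable z : [0,1] → ℝ^d with z(0) = z₀, the action I[z] = ∫₀¹ [(1/2)‖B⁻¹(f(z(t)) − ż(t) − η)‖² + (1/2)tr(Df(z(t)))] dt satisfies I[z] ≥ ((1/4 − L_f²)/‖B‖²) ∫₀¹ ‖ż(t)‖² dt − ‖f(z₀) − η‖²/‖B‖² + dK/2. -/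
/-!
Since `‖B v‖ ≤ ‖B‖ ‖v‖`, the quadratic part of the Lagrangian dominates `‖f(z) − ż − η‖² / (2‖B‖²)`,
and `‖f(z) − ż − η‖² ≥ ‖ż‖²/2 − ‖f(z) − η‖²`. Along the path, `‖z(t) − z₀‖² ≤ (∫₀¹ ‖ż‖)² ≤ ∫₀¹ ‖ż‖²`,
so the Lipschitz bound gives `‖f(z(t)) − η‖² ≤ 2 L_f² ∫₀¹ ‖ż‖² + 2 ‖f(z₀) − η‖²` uniformly in `t`,
while the trace term is at least `dK`. Integrating the resulting pointwise lower bound gives the estimate.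
-/

/-- Multiplication of a Euclidean vector by a matrix, viewed again as a Euclidean vector. -/
noncomputable def matMulVec {d : ℕ} (B : Matrix (Fin d) (Fin d) ℝ)
    (v : EuclideanSpace ℝ (Fin d)) : EuclideanSpace ℝ (Fin d) :=
  WithLp.toLp 2 (B.mulVec v)

/-- The operator norm of a matrix acting on Euclidean space. -/
noncomputable def matOpNorm {d : ℕ} (B : Matrix (Fin d) (Fin d) ℝ) : ℝ :=
  ‖LinearMap.toContinuousLinearMap (Matrix.toEuclideanLin B)‖

section NormedGroup

variable {E F : Type*} [SeminormedAddCommGroup E] [SeminormedAddCommGroup F]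

theorem half_sq_norm_sub_sq_norm_le_sq_norm_sub (a b : E) :
    ‖b‖ ^ 2 / 2 - ‖a‖ ^ 2 ≤ ‖a - b‖ ^ 2 := by
  have h : ‖b‖ ≤ ‖a‖ + ‖a - b‖ := by simpa using norm_sub_le a (a - b)
  nlinarith [norm_nonneg b, sq_nonneg (‖a - b‖ - ‖a‖)]

theorem sq_norm_sub_le_of_lipschitz {f : E → F} {L : ℝ}
    (hf : ∀ a b, ‖f a - f b‖ ≤ L * ‖a - b‖) (x x₀ : E) (c : F) :
    ‖f x - c‖ ^ 2 ≤ 2 * L ^ 2 * ‖x - x₀‖ ^ 2 + 2 * ‖f x₀ - c‖ ^ 2 := by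
  have h : ‖f x - c‖ ≤ L * ‖x - x₀‖ + ‖f x₀ - c‖ :=
    (norm_sub_le_norm_sub_add_norm_sub _ (f x₀) _).trans (by gcongr; exact hf x x₀)
  nlinarith [norm_nonneg (f x - c), sq_nonneg (L * ‖x - x₀‖ - ‖f x₀ - c‖)]

end NormedGroup

section MatrixNorm

variable {d : ℕ}

theorem norm_matMulVec_le (B : Matrix (Fin d) (Fin d) ℝ) (v : EuclideanSpace ℝ (Fin d)) :
    ‖matMulVec B v‖ ≤ matOpNorm B * ‖v‖ :=
  (LinearMap.toContinuousLinearMap (Matrix.toEuclideanLin B)).le_opNorm v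

@[fun_prop]
theorem continuous_matMulVec (B : Matrix (Fin d) (Fin d) ℝ) : Continuous (matMulVec B) :=
  (LinearMap.toContinuousLinearMap (Matrix.toEuclideanLin B)).continuous

theorem matMulVec_matMulVec_inv {B : Matrix (Fin d) (Fin d) ℝ} (hB : IsUnit B.det) (v : EuclideanSpace ℝ (Fin d)) :
    matMulVec B (matMulVec B⁻¹ v) = v := by
  simp only [matMulVec, WithLp.ofLp_toLp, Matrix.mulVec_mulVec, Matrix.mul_nonsing_inv B hB,
    Matrix.one_mulVec, WithLp.toLp_ofLp]

theorem sq_norm_div_sq_matOpNorm_le {B : Matrix (Fin d) (Fin d) ℝ} (hB : IsUnit B.det) (v : EuclideanSpace ℝ (Fin d)) :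
    ‖v‖ ^ 2 / matOpNorm B ^ 2 ≤ ‖matMulVec B⁻¹ v‖ ^ 2 := by
  have hv : ‖v‖ ≤ matOpNorm B * ‖matMulVec B⁻¹ v‖ := by
    simpa only [matMulVec_matMulVec_inv hB] using norm_matMulVec_le B (matMulVec B⁻¹ v)
  refine div_le_of_le_mul₀ (sq_nonneg _) (sq_nonneg _) ?_
  rw [← mul_pow, mul_comm]
  exact pow_le_pow_left₀ (norm_nonneg v) hv 2

theorem le_half_sq_norm_matMulVec_inv_sub {B : Matrix (Fin d) (Fin d) ℝ} (hB : IsUnit B.det)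
    {g v : EuclideanSpace ℝ (Fin d)} {C : ℝ} (hg : ‖g‖ ^ 2 ≤ C) :
    (‖v‖ ^ 2 / 2 - C) / (2 * matOpNorm B ^ 2) ≤ 1 / 2 * ‖matMulVec B⁻¹ (g - v)‖ ^ 2 := by
  have hsplit := half_sq_norm_sub_sq_norm_le_sq_norm_sub g v
  calc (‖v‖ ^ 2 / 2 - C) / (2 * matOpNorm B ^ 2) ≤ ‖g - v‖ ^ 2 / matOpNorm B ^ 2 / 2 := by
        rw [div_div, mul_comm (matOpNorm B ^ 2)]
        exact div_le_div_of_nonneg_right (by linarith) (by positivity)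
    _ ≤ 1 / 2 * ‖matMulVec B⁻¹ (g - v)‖ ^ 2 := by linarith [sq_norm_div_sq_matOpNorm_le hB (g - v)]

end MatrixNorm

theorem sq_intervalIntegral_le_intervalIntegral_sq {g : ℝ → ℝ}
    (hg : IntervalIntegrable g MeasureTheory.volume 0 1)
    (hg2 : IntervalIntegrable (fun t ↦ g t ^ 2) MeasureTheory.volume 0 1) :
    (∫ t in (0:ℝ)..1, g t) ^ 2 ≤ ∫ t in (0:ℝ)..1, g t ^ 2 := by
  set c := ∫ t in (0:ℝ)..1, g t
  have hvar : (∫ t in (0:ℝ)..1, (g t - c) ^ 2) = (∫ t in (0:ℝ)..1, g t ^ 2) - c ^ 2 := by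
    have hexpand : ∀ t, (g t - c) ^ 2 = g t ^ 2 - (2 * c) * g t + c ^ 2 := fun t ↦ by ring
    simp_rw [hexpand]
    rw [intervalIntegral.integral_add (hg2.sub (hg.const_mul _)) intervalIntegrable_const,
      intervalIntegral.integral_sub hg2 (hg.const_mul _), intervalIntegral.integral_const_mul,
      intervalIntegral.integral_const]
    simp only [sub_zero, one_smul]
    ring
  have hnonneg : 0 ≤ ∫ t in (0:ℝ)..1, (g t - c) ^ 2 :=
    intervalIntegral.integral_nonneg zero_le_one fun t _ ↦ sq_nonneg _
  linarith

section Path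

variable {E : Type*} [NormedAddCommGroup E] [NormedSpace ℝ E] [CompleteSpace E]
  {z : ℝ → E}

theorem norm_sub_le_intervalIntegral_norm_deriv (hz : ContDiff ℝ 1 z) {a b t : ℝ}
    (ht : t ∈ Set.Icc a b) : ‖z t - z a‖ ≤ ∫ s in a..b, ‖deriv z s‖ := by
  have hdz : Continuous (deriv z) := hz.continuous_deriv le_rfl
  rw [← intervalIntegral.integral_deriv_eq_sub
    (fun s _ ↦ (hz.differentiable one_ne_zero).differentiableAt) (hdz.intervalIntegrable a t)]
  refine (intervalIntegral.norm_integral_le_integral_norm ht.1).trans ?_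
  exact intervalIntegral.integral_mono_interval le_rfl ht.1 ht.2
    (Filter.Eventually.of_forall fun s ↦ norm_nonneg _) (hdz.norm.intervalIntegrable a b)

theorem sq_norm_sub_le_intervalIntegral_sq_norm_deriv (hz : ContDiff ℝ 1 z) {t : ℝ}
    (ht : t ∈ Set.Icc (0:ℝ) 1) : ‖z t - z 0‖ ^ 2 ≤ ∫ s in (0:ℝ)..1, ‖deriv z s‖ ^ 2 := by
  have hdz : Continuous fun s ↦ ‖deriv z s‖ := (hz.continuous_deriv le_rfl).norm
  calc ‖z t - z 0‖ ^ 2 ≤ (∫ s in (0:ℝ)..1, ‖deriv z s‖) ^ 2 :=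
        pow_le_pow_left₀ (norm_nonneg _) (norm_sub_le_intervalIntegral_norm_deriv hz ht) 2
    _ ≤ ∫ s in (0:ℝ)..1, ‖deriv z s‖ ^ 2 :=
        sq_intervalIntegral_le_intervalIntegral_sq (hdz.intervalIntegrable 0 1)
          ((hdz.pow 2).intervalIntegrable 0 1)

theorem sq_norm_comp_sub_le_of_lipschitz {F : Type*} [SeminormedAddCommGroup F] {f : E → F}
    {L : ℝ} (hf : ∀ a b, ‖f a - f b‖ ≤ L * ‖a - b‖) (hz : ContDiff ℝ 1 z) {t : ℝ}
    (ht : t ∈ Set.Icc (0:ℝ) 1) (c : F) :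
    ‖f (z t) - c‖ ^ 2 ≤ 2 * L ^ 2 * (∫ s in (0:ℝ)..1, ‖deriv z s‖ ^ 2) + 2 * ‖f (z 0) - c‖ ^ 2 := by
  refine (sq_norm_sub_le_of_lipschitz hf (z t) (z 0) c).trans ?_
  gcongr
  exact sq_norm_sub_le_intervalIntegral_sq_norm_deriv hz ht

end Path

theorem OM_action_coercivity_general
    (d : ℕ)
    (B : Matrix (Fin d) (Fin d) ℝ) (hB : IsUnit B.det)
    (η : EuclideanSpace ℝ (Fin d))
    (f : EuclideanSpace ℝ (Fin d) → EuclideanSpace ℝ (Fin d))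
    (hf : ContDiff ℝ 1 f)
    (Lf : ℝ) (hLip : ∀ a b : EuclideanSpace ℝ (Fin d), ‖f a - f b‖ ≤ Lf * ‖a - b‖)
    (K : ℝ)
    (hK : ∀ (x : EuclideanSpace ℝ (Fin d)) (i : Fin d),
      K ≤ fderiv ℝ f x (EuclideanSpace.single i 1) i)
    (z₀ : EuclideanSpace ℝ (Fin d))
    (z : ℝ → EuclideanSpace ℝ (Fin d))
    (hz : ContDiff ℝ 1 z) (hz0 : z 0 = z₀) :
    ((1 / 4 - Lf ^ 2) / matOpNorm B ^ 2) * (∫ t in (0:ℝ)..1, ‖deriv z t‖ ^ 2)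
        - ‖f z₀ - η‖ ^ 2 / matOpNorm B ^ 2 + d * K / 2
      ≤ ∫ t in (0:ℝ)..1,
          ((1 / 2) * ‖matMulVec B⁻¹ (f (z t) - deriv z t - η)‖ ^ 2
            + (1 / 2) * ∑ i, fderiv ℝ f (z t) (EuclideanSpace.single i 1) i) := by
  subst hz0
  set S := ∫ t in (0:ℝ)..1, ‖deriv z t‖ ^ 2
  set C := 2 * Lf ^ 2 * S + 2 * ‖f (z 0) - η‖ ^ 2
  have hdz : Continuous (deriv z) := hz.continuous_deriv le_rfl
  have hforce : ∀ t ∈ Set.Icc (0:ℝ) 1, ‖f (z t) - η‖ ^ 2 ≤ C := fun t ht ↦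
    sq_norm_comp_sub_le_of_lipschitz hLip hz ht η
  have htrace : ∀ x, (d : ℝ) * K ≤ ∑ i, fderiv ℝ f x (EuclideanSpace.single i 1) i := fun x ↦ by
    simpa using Finset.card_nsmul_le_sum Finset.univ _ K fun i _ ↦ hK x i
  have hpointwise : ∀ t ∈ Set.Icc (0:ℝ) 1,
      (‖deriv z t‖ ^ 2 / 2 - C) / (2 * matOpNorm B ^ 2) + d * K / 2
        ≤ (1 / 2) * ‖matMulVec B⁻¹ (f (z t) - deriv z t - η)‖ ^ 2
          + (1 / 2) * ∑ i, fderiv ℝ f (z t) (EuclideanSpace.single i 1) i := fun t ht ↦ by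
    have hquad := le_half_sq_norm_matMulVec_inv_sub hB (v := deriv z t) (hforce t ht)
    rw [sub_right_comm] at hquad
    linarith [htrace (z t)]
  have hcont : Continuous fun t ↦ (1 / 2) * ‖matMulVec B⁻¹ (f (z t) - deriv z t - η)‖ ^ 2
      + (1 / 2) * ∑ i, fderiv ℝ f (z t) (EuclideanSpace.single i 1) i := by
    have hDf := hf.continuous_fderiv one_ne_zero
    fun_prop
  have hlower : ∫ t in (0:ℝ)..1, ((‖deriv z t‖ ^ 2 / 2 - C) / (2 * matOpNorm B ^ 2) + d * K / 2)
      = (S / 2 - C) / (2 * matOpNorm B ^ 2) + d * K / 2 := by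
    rw [intervalIntegral.integral_add (Continuous.intervalIntegrable (by fun_prop) 0 1)
        intervalIntegrable_const, intervalIntegral.integral_div,
      intervalIntegral.integral_sub (Continuous.intervalIntegrable (by fun_prop) 0 1)
        intervalIntegrable_const,
      intervalIntegral.integral_div, intervalIntegral.integral_const,
      intervalIntegral.integral_const]
    simp only [sub_zero, one_smul, S]
  calc ((1 / 4 - Lf ^ 2) / matOpNorm B ^ 2) * S - ‖f (z 0) - η‖ ^ 2 / matOpNorm B ^ 2 + d * K / 2
      = (S / 2 - C) / (2 * matOpNorm B ^ 2) + d * K / 2 := by ring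
    _ ≤ _ := hlower ▸ intervalIntegral.integral_mono_on zero_le_one
        (Continuous.intervalIntegrable (by fun_prop) 0 1) (hcont.intervalIntegrable 0 1) hpointwise

/-- The coercivity estimate (3.3) for the Onsager–Machlup action functional
`I[z] = ∫₀¹ (1/2)‖B⁻¹(f(z) − ż − η)‖² + (1/2) tr(Df(z)) dt`:
`I[z] ≥ ((1/4 − L_f²)/‖B‖²) ∫₀¹‖ż‖² − ‖f(z₀) − η‖²/‖B‖² + dK/2`. -/
theorem OM_action_coercivity
    (d : ℕ) (hd : 1 ≤ d)
    (B : Matrix (Fin d) (Fin d) ℝ) (hB : IsUnit B.det)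
    (η : EuclideanSpace ℝ (Fin d))
    (f : EuclideanSpace ℝ (Fin d) → EuclideanSpace ℝ (Fin d))
    (hf : ContDiff ℝ 1 f)
    (Lf : ℝ) (hLip : ∀ a b : EuclideanSpace ℝ (Fin d), ‖f a - f b‖ ≤ Lf * ‖a - b‖)
    (K : ℝ)
    (hK : ∀ (x : EuclideanSpace ℝ (Fin d)) (i : Fin d),
      K ≤ fderiv ℝ f x (EuclideanSpace.single i 1) i)
    (z₀ : EuclideanSpace ℝ (Fin d))
    (z : ℝ → EuclideanSpace ℝ (Fin d))
    (hz : ContDiff ℝ 1 z) (hz0 : z 0 = z₀) :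
    ((1 / 4 - Lf ^ 2) / matOpNorm B ^ 2) * (∫ t in (0:ℝ)..1, ‖deriv z t‖ ^ 2)
        - ‖f z₀ - η‖ ^ 2 / matOpNorm B ^ 2 + d * K / 2
      ≤ ∫ t in (0:ℝ)..1,
          ((1 / 2) * ‖matMulVec B⁻¹ (f (z t) - deriv z t - η)‖ ^ 2
            + (1 / 2) * ∑ i, fderiv ℝ f (z t) (EuclideanSpace.single i 1) i) :=
  OM_action_coercivity_general d B hB η f hf Lf hLip K hK z₀ z hz hz0
end

section
/- Let d ≥ 1, let B be an invertible d×d real matrix, η ∈ ℝ^d, and let f : ℝ^d → ℝ^d be twice continuously differentiable. Suppose z : [0,1] → ℝ^d is twice continuously differentiable with z(0) = z₀ and z(1) = z₁, and z minimizes the action I[w] = ∫₀¹ [(1/2)‖B⁻¹(f(w(t)) − ẇ(t) − η)‖² + (1/2)tr(Df(w(t)))] dt among all twice continuously differentiable curves w : [0,1] → ℝ^d with w(0) = z₀ and w(1) = z₁. Then for every t ∈ (0,1) and every i ∈ {1,…,d}, z satisfies the Euler–Lagrange equation ⟨B⁻¹(z̈(t) − Df(z(t))ż(t)), B⁻¹e_i⟩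 = ⟨B⁻¹(f(z(t)) − ż(t) − η), B⁻¹ ∂f/∂x_i(z(t))⟩ + (1/2) Σ_{j=1}^{d} ∂²f^j/∂x_i∂x_j(z(t)), where (e_i) is the standard orthonormal basis of ℝ^d and ∂f/∂x_i denotes the vector of partial derivatives (∂f^1/∂x_i, …, ∂f^d/∂x_i). -/
/-- The Onsager–Machlup action functional
`I[w] = ∫₀¹ (1/2)‖B⁻¹(f(w(t)) − ẇ(t) − η)‖² + (1/2) tr(Df(w(t))) dt`. -/
noncomputable def OMaction {d : ℕ} (B : Matrix (Fin d) (Fin d) ℝ)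
    (η : EuclideanSpace ℝ (Fin d))
    (f : EuclideanSpace ℝ (Fin d) → EuclideanSpace ℝ (Fin d))
    (w : ℝ → EuclideanSpace ℝ (Fin d)) : ℝ :=
  ∫ t in (0:ℝ)..1,
    ((1 / 2) * ‖matMulVec B⁻¹ (f (w t) - deriv w t - η)‖ ^ 2
      + (1 / 2) * ∑ i, fderiv ℝ f (w t) (EuclideanSpace.single i 1) i)

open MeasureTheory Set Function
open scoped ContDiff

-- The test functions are smooth bumps, which need not be analytic: hence `n ≤ ∞`.
theorem eqOn_zero_of_forall_integral_mul_eq_zero {n : WithTop ℕ∞} (hn : n ≤ ∞) {g : ℝ → ℝ}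
    {a b : ℝ} (hg : Continuous g)
    (h : ∀ ψ : ℝ → ℝ, ContDiff ℝ n ψ → ψ a = 0 → ψ b = 0 → ∫ t in a..b, ψ t * g t = 0) :
    EqOn g 0 (Ioo a b) := by
  rcases lt_or_ge b a with hba | hab
  · simp [Ioo_eq_empty_of_le hba.le]
  have hae : ∀ᵐ t, t ∈ Ioo a b → g t = 0 := by
    refine isOpen_Ioo.ae_eq_zero_of_integral_contDiff_smul_eq_zero
      (hg.locallyIntegrable.locallyIntegrableOn _) fun φ hφ _ hsupp => ?_
    have hvanish : ∀ t ∉ Ioo a b, φ t = 0 := fun t ht =>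
      image_eq_zero_of_notMem_tsupport fun h => ht (hsupp h)
    rw [← h φ (hφ.of_le hn) (hvanish a (by simp)) (hvanish b (by simp)),
      intervalIntegral.integral_of_le hab, setIntegral_eq_integral_of_forall_compl_eq_zero]
    · rfl
    · exact fun t ht => by rw [hvanish t fun h => ht (Ioo_subset_Ioc_self h), zero_mul]
  exact Measure.eqOn_open_of_ae_eq ((ae_restrict_iff' measurableSet_Ioo).2 hae) isOpen_Ioo
    hg.continuousOn continuousOn_const

theorem eqOn_deriv_of_forall_integral_mul_add_deriv_mul_eq_zero {n : WithTop ℕ∞} (hn₁ : 1 ≤ n)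
    (hn : n ≤ ∞) {P Q Q' : ℝ → ℝ} {a b : ℝ} (hP : Continuous P)
    (hQ : ∀ t, HasDerivAt Q (Q' t) t) (hQ' : Continuous Q')
    (h : ∀ ψ : ℝ → ℝ, ContDiff ℝ n ψ → ψ a = 0 → ψ b = 0 →
      ∫ t in a..b, (ψ t * P t + deriv ψ t * Q t) = 0) :
    EqOn P Q' (Ioo a b) := by
  refine fun t ht => sub_eq_zero.1 <|
    eqOn_zero_of_forall_integral_mul_eq_zero hn (hP.sub hQ') (fun ψ hψ ha hb => ?_) ht
  have hψ' := hψ.continuous_deriv hn₁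
  have hψd := hψ.differentiable (zero_lt_one.trans_le hn₁).ne'
  have hQc : Continuous Q := continuous_iff_continuousAt.2 fun t => (hQ t).continuousAt
  have hparts : ∫ t in a..b, (deriv ψ t * Q t + ψ t * Q' t) = 0 := by
    rw [intervalIntegral.integral_deriv_mul_eq_sub (fun t _ => (hψd t).hasDerivAt)
      (fun t _ => hQ t) (hψ'.intervalIntegrable _ _) (hQ'.intervalIntegrable _ _), ha, hb]
    ring
  calc ∫ t in a..b, ψ t * (P - Q') t
      = (∫ t in a..b, (ψ t * P t + deriv ψ t * Q t))
        - ∫ t in a..b, (deriv ψ t * Q t + ψ t * Q' t) := by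
        rw [← intervalIntegral.integral_sub]
        · congr 1; ext t; simp only [Pi.sub_apply]; ring
        · exact ((hψd.continuous.mul hP).add (hψ'.mul hQc)).intervalIntegrable _ _
        · exact ((hψ'.mul hQc).add (hψd.continuous.mul hQ')).intervalIntegrable _ _
    _ = 0 := by rw [h ψ hψ ha hb, hparts, sub_zero]

theorem hasDerivAt_intervalIntegral_of_continuous_uncurry_deriv {E : Type*}
    [NormedAddCommGroup E] [NormedSpace ℝ E] {F F' : ℝ → ℝ → E} {a b x₀ : ℝ}
    (hF : ∀ x, Continuous (F x)) (hF' : Continuous (uncurry F'))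
    (hderiv : ∀ x t, HasDerivAt (F · t) (F' x t) x) :
    HasDerivAt (fun x => ∫ t in a..b, F x t) (∫ t in a..b, F' x₀ t) x₀ := by
  obtain ⟨C, hC⟩ := ((isCompact_closedBall x₀ 1).prod isCompact_uIcc).exists_bound_of_continuousOn
    hF'.continuousOn
  exact (intervalIntegral.hasDerivAt_integral_of_dominated_loc_of_deriv_le (bound := fun _ => C)
    (Metric.closedBall_mem_nhds x₀ one_pos) (.of_forall fun x => (hF x).aestronglyMeasurable)
    ((hF x₀).intervalIntegrable a b)
    (hF'.comp (continuous_const.prodMk continuous_id)).aestronglyMeasurable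
    (ae_of_all _ fun t ht x hx => hC (x, t) ⟨hx, uIoc_subset_uIcc ht⟩) intervalIntegrable_const
    (ae_of_all _ fun t _ x _ => hderiv x t)).2

section Lagrangian

variable {E : Type*} [NormedAddCommGroup E] [NormedSpace ℝ E]

noncomputable def lagrangianAction (L : E × E → ℝ) (a b : ℝ) (w : ℝ → E) : ℝ :=
  ∫ t in a..b, L (w t, deriv w t)

def IsActionMinimizer (L : E × E → ℝ) (n : WithTop ℕ∞) (a b : ℝ) (z : ℝ → E) : Prop :=
  ∀ w : ℝ → E, ContDiff ℝ n w → w a = z a → w b = z b →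
    lagrangianAction L a b z ≤ lagrangianAction L a b w

variable {L : E × E → ℝ} {n : WithTop ℕ∞} {a b : ℝ} {z : ℝ → E}

theorem integral_fderiv_lagrangian_eq_zero_of_minimizer (hL : ContDiff ℝ 1 L) (hn : 1 ≤ n)
    (hz : ContDiff ℝ n z) (hmin : IsActionMinimizer L n a b z)
    {h : ℝ → E} (hh : ContDiff ℝ n h) (ha : h a = 0) (hb : h b = 0) :
    ∫ t in a..b, fderiv ℝ L (z t, deriv z t) (h t, deriv h t) = 0 := by
  set γ : ℝ → E × E := fun t => (z t, deriv z t)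
  set δ : ℝ → E × E := fun t => (h t, deriv h t)
  have hγ : Continuous γ := hz.continuous.prodMk (hz.continuous_deriv hn)
  have hδ : Continuous δ := hh.continuous.prodMk (hh.continuous_deriv hn)
  have hzd := hz.differentiable (zero_lt_one.trans_le hn).ne'
  have hhd := hh.differentiable (zero_lt_one.trans_le hn).ne'
  have haction : ∀ x : ℝ, lagrangianAction L a b (z + x • h) = ∫ t in a..b, L (γ t + x • δ t) :=
    fun x => intervalIntegral.integral_congr fun t _ => by
      simp [γ, δ, deriv_add (hzd t) ((hhd t).const_smul x), deriv_const_smul x (hhd t)]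
  have hderiv : HasDerivAt (fun x : ℝ => ∫ t in a..b, L (γ t + x • δ t))
      (∫ t in a..b, fderiv ℝ L (γ t) (δ t)) 0 := by
    simpa using hasDerivAt_intervalIntegral_of_continuous_uncurry_deriv (x₀ := 0)
      (F' := fun x t => fderiv ℝ L (γ t + x • δ t) (δ t))
      (fun x => hL.continuous.comp (hγ.add (continuous_const.smul hδ)))
      (((hL.continuous_fderiv one_ne_zero).comp ((hγ.comp continuous_snd).add
        (continuous_fst.smul (hδ.comp continuous_snd)))).clm_apply (hδ.comp continuous_snd))
      fun x t => (hL.differentiable one_ne_zero _).hasFDerivAt.comp_hasDerivAt x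
        (by simpa using ((hasDerivAt_id x).smul_const (δ t)).const_add (γ t))
  refine IsLocalMin.hasDerivAt_eq_zero (.of_forall fun x => ?_) hderiv
  have := hmin (z + x • h) (hz.add (hh.const_smul x)) (by simp [ha]) (by simp [hb])
  rwa [← haction, ← haction, zero_smul, add_zero]

theorem euler_lagrange_of_minimizer (hL : ContDiff ℝ 1 L) (hn₁ : 1 ≤ n) (hn : n ≤ ∞)
    (hz : ContDiff ℝ n z) (hmin : IsActionMinimizer L n a b z) (v : E) {Q' : ℝ → ℝ}
    (hQ' : Continuous Q')
    (hQ : ∀ t, HasDerivAt (fun s => fderiv ℝ L (z s, deriv z s) (0, v)) (Q' t) t) :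
    EqOn (fun t => fderiv ℝ L (z t, deriv z t) (v, 0)) Q' (Ioo a b) := by
  have hγ : Continuous fun t => (z t, deriv z t) := hz.continuous.prodMk (hz.continuous_deriv hn₁)
  refine eqOn_deriv_of_forall_integral_mul_add_deriv_mul_eq_zero hn₁ hn
    (((hL.continuous_fderiv one_ne_zero).comp hγ).clm_apply continuous_const) hQ hQ'
    fun ψ hψ ha hb => ?_
  have hψd := hψ.differentiable (zero_lt_one.trans_le hn₁).ne'
  rw [← integral_fderiv_lagrangian_eq_zero_of_minimizer hL hn₁ hz hmin
    (hψ.smul contDiff_const) (h := fun t => ψ t • v) (by simp [ha]) (by simp [hb])]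
  refine intervalIntegral.integral_congr fun t _ => ?_
  have hsplit : (ψ t • v, deriv (fun t => ψ t • v) t) = ψ t • (v, 0) + deriv ψ t • (0, v) := by
    simp [deriv_smul_const (hψd t)]
  simp only [hsplit, map_add, map_smul, smul_eq_mul]

end Lagrangian

section OnsagerMachlup

variable {d : ℕ} {B : Matrix (Fin d) (Fin d) ℝ} {η : EuclideanSpace ℝ (Fin d)}
  {f : EuclideanSpace ℝ (Fin d) → EuclideanSpace ℝ (Fin d)}

theorem matMulVec_eq_toEuclideanCLM : matMulVec B = Matrix.toEuclideanCLM (𝕜 := ℝ) B := rfl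

noncomputable def omLagrangian (B : Matrix (Fin d) (Fin d) ℝ) (η : EuclideanSpace ℝ (Fin d))
    (f : EuclideanSpace ℝ (Fin d) → EuclideanSpace ℝ (Fin d))
    (q : EuclideanSpace ℝ (Fin d) × EuclideanSpace ℝ (Fin d)) : ℝ :=
  (1 / 2) * ‖matMulVec B⁻¹ (f q.1 - q.2 - η)‖ ^ 2
    + (1 / 2) * ∑ i, fderiv ℝ f q.1 (EuclideanSpace.single i 1) i

theorem OMaction_eq_lagrangianAction :
    OMaction B η f = lagrangianAction (omLagrangian B η f) 0 1 := rfl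

theorem contDiff_fderiv_apply_single_apply (hf : ContDiff ℝ 2 f) (j : Fin d) :
    ContDiff ℝ 1 fun x => fderiv ℝ f x (EuclideanSpace.single j 1) j :=
  (EuclideanSpace.proj j).contDiff.comp ((hf.fderiv_right le_rfl).clm_apply contDiff_const)

theorem contDiff_omLagrangian (hf : ContDiff ℝ 2 f) : ContDiff ℝ 1 (omLagrangian B η f) := by
  have hu : ContDiff ℝ 1 fun q : EuclideanSpace ℝ (Fin d) × EuclideanSpace ℝ (Fin d) =>
      Matrix.toEuclideanCLM (𝕜 := ℝ) B⁻¹ (f q.1 - q.2 - η) :=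
    (ContinuousLinearMap.contDiff _).comp
      (((hf.of_le one_le_two).comp contDiff_fst).sub contDiff_snd |>.sub contDiff_const)
  exact (contDiff_const.mul (hu.norm_sq ℝ)).add (contDiff_const.mul (ContDiff.sum fun j _ =>
    (contDiff_fderiv_apply_single_apply hf j).comp contDiff_fst))

theorem fderiv_omLagrangian_apply (hf : ContDiff ℝ 2 f)
    (q k : EuclideanSpace ℝ (Fin d) × EuclideanSpace ℝ (Fin d)) :
    fderiv ℝ (omLagrangian B η f) q k =
      inner ℝ (matMulVec B⁻¹ (f q.1 - q.2 - η)) (matMulVec B⁻¹ (fderiv ℝ f q.1 k.1 - k.2))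
        + (1 / 2) * ∑ j, fderiv ℝ (fun x => fderiv ℝ f x (EuclideanSpace.single j 1) j) q.1 k.1 := by
  set A := Matrix.toEuclideanCLM (𝕜 := ℝ) B⁻¹
  have hu : HasFDerivAt (fun q : EuclideanSpace ℝ (Fin d) × EuclideanSpace ℝ (Fin d) =>
      A (f q.1 - q.2 - η)) (A.comp ((fderiv ℝ f q.1).comp (.fst ℝ _ _) - .snd ℝ _ _)) q :=
    A.hasFDerivAt.comp q ((((hf.differentiable two_ne_zero q.1).hasFDerivAt.comp q
      hasFDerivAt_fst).sub hasFDerivAt_snd).sub_const η)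
  have htr := HasFDerivAt.fun_sum (u := Finset.univ) fun j _ =>
    ((contDiff_fderiv_apply_single_apply hf j).differentiable one_ne_zero q.1).hasFDerivAt.comp q
      (hasFDerivAt_fst (p := q))
  have hL : HasFDerivAt (omLagrangian B η f) _ q :=
    (hu.norm_sq.const_mul (1 / 2)).add (htr.const_mul (1 / 2))
  rw [hL.fderiv]
  simp [A, matMulVec_eq_toEuclideanCLM, inner_sub_left, inner_sub_right]

theorem hasDerivAt_fderiv_omLagrangian_apply_zero (hf : ContDiff ℝ 2 f)
    {z : ℝ → EuclideanSpace ℝ (Fin d)} (hz : ContDiff ℝ 2 z) (v : EuclideanSpace ℝ (Fin d))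
    (t : ℝ) :
    HasDerivAt (fun s => fderiv ℝ (omLagrangian B η f) (z s, deriv z s) (0, v))
      (inner ℝ (matMulVec B⁻¹ (deriv (deriv z) t - fderiv ℝ f (z t) (deriv z t)))
        (matMulVec B⁻¹ v)) t := by
  have hu : HasDerivAt (fun s => matMulVec B⁻¹ (f (z s) - deriv z s - η))
      (matMulVec B⁻¹ (fderiv ℝ f (z t) (deriv z t) - deriv (deriv z) t)) t :=
    (Matrix.toEuclideanCLM (𝕜 := ℝ) B⁻¹).hasFDerivAt.comp_hasDerivAt t
      ((((hf.differentiable two_ne_zero _).hasFDerivAt.comp_hasDerivAt t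
        ((hz.differentiable two_ne_zero) t).hasDerivAt).sub
        ((hz.deriv' (n := 1)).differentiable one_ne_zero t).hasDerivAt).sub_const η)
  have hpartial : (fun s => fderiv ℝ (omLagrangian B η f) (z s, deriv z s) (0, v)) =
      fun s => inner ℝ (matMulVec B⁻¹ (f (z s) - deriv z s - η)) (matMulVec B⁻¹ (0 - v)) := by
    ext s
    simp [fderiv_omLagrangian_apply hf]
  rw [hpartial]
  refine (hu.inner ℝ (hasDerivAt_const t (matMulVec B⁻¹ (0 - v)))).congr_deriv ?_
  simp [matMulVec_eq_toEuclideanCLM, inner_sub_left]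

end OnsagerMachlup

theorem OM_minimizer_satisfies_euler_lagrange_general
    (d : ℕ)
    (B : Matrix (Fin d) (Fin d) ℝ)
    (η : EuclideanSpace ℝ (Fin d))
    (f : EuclideanSpace ℝ (Fin d) → EuclideanSpace ℝ (Fin d))
    (hf : ContDiff ℝ 2 f)
    (z₀ z₁ : EuclideanSpace ℝ (Fin d))
    (z : ℝ → EuclideanSpace ℝ (Fin d))
    (hz : ContDiff ℝ 2 z) (hz0 : z 0 = z₀) (hz1 : z 1 = z₁)
    (hmin : ∀ w : ℝ → EuclideanSpace ℝ (Fin d),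
      ContDiff ℝ 2 w → w 0 = z₀ → w 1 = z₁ → OMaction B η f z ≤ OMaction B η f w) :
    ∀ t ∈ Set.Ioo (0:ℝ) 1, ∀ i : Fin d,
      (inner ℝ (matMulVec B⁻¹ (deriv (deriv z) t - fderiv ℝ f (z t) (deriv z t)))
          (matMulVec B⁻¹ (EuclideanSpace.single i 1)) : ℝ)
        = (inner ℝ (matMulVec B⁻¹ (f (z t) - deriv z t - η))
            (matMulVec B⁻¹ (fderiv ℝ f (z t) (EuclideanSpace.single i 1))) : ℝ)
          + (1 / 2) * ∑ j, fderiv ℝ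
              (fun x => fderiv ℝ f x (EuclideanSpace.single j 1) j) (z t)
              (EuclideanSpace.single i 1) := by
  intro t ht i
  have hzmin : IsActionMinimizer (omLagrangian B η f) 2 0 1 z := fun w hw h0 h1 => by
    rw [← OMaction_eq_lagrangianAction]
    exact hmin w hw (h0.trans hz0) (h1.trans hz1)
  have hQ' : Continuous fun s => inner ℝ
      (matMulVec B⁻¹ (deriv (deriv z) s - fderiv ℝ f (z s) (deriv z s)))
      (matMulVec B⁻¹ (EuclideanSpace.single i 1)) := by
    have := (hz.deriv' (n := 1)).continuous_deriv le_rfl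
    have := hz.continuous_deriv one_le_two
    have := hf.continuous_fderiv two_ne_zero
    rw [matMulVec_eq_toEuclideanCLM]
    fun_prop
  have := euler_lagrange_of_minimizer (contDiff_omLagrangian hf) one_le_two (by decide) hz hzmin
    _ hQ' (hasDerivAt_fderiv_omLagrangian_apply_zero hf hz _) ht
  simpa [fderiv_omLagrangian_apply hf] using this.symm

/-- Theorem 3.1(i) of the paper (the Euler–Lagrange equation (3.2)): a `C²` minimizer `z` of the
Onsager–Machlup action among `C²` curves with fixed endpoints satisfies, for `t ∈ (0,1)` and each
coordinate `i`,
`⟨B⁻¹(z̈ − Df(z)ż), B⁻¹eᵢ⟩ = ⟨B⁻¹(f(z) − ż − η), B⁻¹ ∂f/∂xᵢ(z)⟩ + (1/2) Σⱼ ∂²fʲ/∂xᵢ∂xⱼ(z)`. -/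
theorem OM_minimizer_satisfies_euler_lagrange
    (d : ℕ) (hd : 1 ≤ d)
    (B : Matrix (Fin d) (Fin d) ℝ) (hB : IsUnit B.det)
    (η : EuclideanSpace ℝ (Fin d))
    (f : EuclideanSpace ℝ (Fin d) → EuclideanSpace ℝ (Fin d))
    (hf : ContDiff ℝ 2 f)
    (z₀ z₁ : EuclideanSpace ℝ (Fin d))
    (z : ℝ → EuclideanSpace ℝ (Fin d))
    (hz : ContDiff ℝ 2 z) (hz0 : z 0 = z₀) (hz1 : z 1 = z₁)
    (hmin : ∀ w : ℝ → EuclideanSpace ℝ (Fin d),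
      ContDiff ℝ 2 w → w 0 = z₀ → w 1 = z₁ → OMaction B η f z ≤ OMaction B η f w) :
    ∀ t ∈ Set.Ioo (0:ℝ) 1, ∀ i : Fin d,
      (inner ℝ (matMulVec B⁻¹ (deriv (deriv z) t - fderiv ℝ f (z t) (deriv z t)))
          (matMulVec B⁻¹ (EuclideanSpace.single i 1)) : ℝ)
        = (inner ℝ (matMulVec B⁻¹ (f (z t) - deriv z t - η))
            (matMulVec B⁻¹ (fderiv ℝ f (z t) (EuclideanSpace.single i 1))) : ℝ)
          + (1 / 2) * ∑ j, fderiv ℝ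
              (fun x => fderiv ℝ f x (EuclideanSpace.single j 1) j) (z t)
              (EuclideanSpace.single i 1) :=
  OM_minimizer_satisfies_euler_lagrange_general d B η f hf z₀ z₁ z hz hz0 hz1 hmin
end

section
/- Let d ≥ 1, let B = diag(b₁,…,b_d) with all b_i ≠ 0, let η ∈ ℝ^d, and let f : ℝ^d → ℝ^d be twice continuously differentiable such that the matrix (B⁻¹)ᵀB⁻¹Df(x) is symmetric for every x (i.e. (∂f^i/∂x_j)(x)/b_i² = (∂f^j/∂x_i)(x)/b_j² for all i, j, x). Then a twice continuously differentiable curve z : [0,1] → ℝ^d satisfies, for all t and all i, the Euler–Lagrange equation ⟨B⁻¹(z̈(t) − Df(z(t))ż(t)), B⁻¹e_i⟩ = ⟨B⁻¹(f(z(t)) − ż(t) − η), B⁻¹ ∂f/∂x_i(z(t))⟩ + (1/2)Σ_j ∂²f^j/∂x_i∂x_j(z(t)) if and only if it satisfies the Newton system z̈_i(t) = Σ_{j=1}^{d} (b_i²/b_j²)(f^j(z(t)) − η_j) ∂f^j/∂x_i(z(t)) + (b_i²/2) Σ_{j=1}^{d} ∂²f^j/∂x_i∂x_j(z(t)) for all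 t and all i. -/
open Matrix

lemma inv_diagonal_of_ne_zero {ι : Type*} [Fintype ι] [DecidableEq ι] {b : ι → ℝ}
    (hb : ∀ i, b i ≠ 0) : (diagonal b)⁻¹ = diagonal b⁻¹ :=
  inv_eq_right_inv <| by
    rw [diagonal_mul_diagonal, ← diagonal_one]
    exact congrArg diagonal (funext fun i => mul_inv_cancel₀ (hb i))

lemma matMulVec_inv_diagonal_apply {d : ℕ} {b : Fin d → ℝ} (hb : ∀ i, b i ≠ 0)
    (v : EuclideanSpace ℝ (Fin d)) (k : Fin d) :
    matMulVec (diagonal b)⁻¹ v k = v k / b k := by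
  rw [matMulVec, inv_diagonal_of_ne_zero hb, PiLp.toLp_apply, mulVec_diagonal, Pi.inv_apply,
    inv_mul_eq_div]

lemma inner_matMulVec_inv_diagonal {d : ℕ} {b : Fin d → ℝ} (hb : ∀ i, b i ≠ 0)
    (u v : EuclideanSpace ℝ (Fin d)) :
    inner ℝ (matMulVec (diagonal b)⁻¹ u) (matMulVec (diagonal b)⁻¹ v)
      = ∑ k, u k * v k / b k ^ 2 := by
  rw [PiLp.inner_apply]
  refine Finset.sum_congr rfl fun k _ => ?_
  rw [matMulVec_inv_diagonal_apply hb, matMulVec_inv_diagonal_apply hb, Real.inner_apply]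
  ring

lemma EuclideanSpace.linearMap_apply_eq_sum {ι : Type*} [Fintype ι] [DecidableEq ι]
    {F : Type*} [AddCommGroup F] [Module ℝ F]
    (L : EuclideanSpace ℝ ι →ₗ[ℝ] F) (v : EuclideanSpace ℝ ι) :
    L v = ∑ j, v j • L (EuclideanSpace.single j 1) := by
  conv_lhs => rw [← (EuclideanSpace.basisFun ι ℝ).sum_repr v]
  simp [map_sum, map_smul]

lemma sum_mul_apply_single_div_sq_of_symm {ι : Type*} [Fintype ι] [DecidableEq ι]
    {b : ι → ℝ} (L : EuclideanSpace ℝ ι →ₗ[ℝ] EuclideanSpace ℝ ι)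
    (hL : ∀ i j, L (EuclideanSpace.single j 1) i / b i ^ 2
      = L (EuclideanSpace.single i 1) j / b j ^ 2)
    (v : EuclideanSpace ℝ ι) (i : ι) :
    ∑ j, v j * L (EuclideanSpace.single i 1) j / b j ^ 2 = L v i / b i ^ 2 := by
  rw [EuclideanSpace.linearMap_apply_eq_sum L v, WithLp.ofLp_sum, Finset.sum_apply,
    Finset.sum_div]
  refine Finset.sum_congr rfl fun j _ => ?_
  rw [PiLp.smul_apply, smul_eq_mul, mul_div_assoc, mul_div_assoc, hL]

lemma euler_lagrange_eq_iff_newton_eq {d : ℕ} {b : Fin d → ℝ} (hb : ∀ i, b i ≠ 0)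
    (L : EuclideanSpace ℝ (Fin d) →L[ℝ] EuclideanSpace ℝ (Fin d))
    (hL : ∀ i j, L (EuclideanSpace.single j 1) i / b i ^ 2
      = L (EuclideanSpace.single i 1) j / b j ^ 2)
    (a v y η : EuclideanSpace ℝ (Fin d)) (S : ℝ) (i : Fin d) :
    inner ℝ (matMulVec (diagonal b)⁻¹ (a - L v))
        (matMulVec (diagonal b)⁻¹ (EuclideanSpace.single i 1))
      = inner ℝ (matMulVec (diagonal b)⁻¹ (y - v - η))
          (matMulVec (diagonal b)⁻¹ (L (EuclideanSpace.single i 1))) + 1 / 2 * S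
    ↔ a i = ∑ j, (b i ^ 2 / b j ^ 2) * (y j - η j) * L (EuclideanSpace.single i 1) j
        + b i ^ 2 / 2 * S := by
  have hvelocity := sum_mul_apply_single_div_sq_of_symm L.toLinearMap hL v i
  simp only [ContinuousLinearMap.coe_coe] at hvelocity
  rw [inner_matMulVec_inv_diagonal hb, inner_matMulVec_inv_diagonal hb,
    Finset.sum_eq_single_of_mem i (Finset.mem_univ i) fun k _ hk => by simp [hk]]
  have hsplit : ∑ j, (y - v - η) j * L (EuclideanSpace.single i 1) j / b j ^ 2
      = ∑ j, (y j - η j) * L (EuclideanSpace.single i 1) j / b j ^ 2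
        - ∑ j, v j * L (EuclideanSpace.single i 1) j / b j ^ 2 := by
    rw [← Finset.sum_sub_distrib]
    refine Finset.sum_congr rfl fun j _ => ?_
    simp only [PiLp.sub_apply]
    ring
  have hnewton : ∑ j, (b i ^ 2 / b j ^ 2) * (y j - η j) * L (EuclideanSpace.single i 1) j
      = b i ^ 2 * ∑ j, (y j - η j) * L (EuclideanSpace.single i 1) j / b j ^ 2 := by
    rw [Finset.mul_sum]
    refine Finset.sum_congr rfl fun j _ => ?_
    ring
  have hbi : b i ^ 2 ≠ 0 := pow_ne_zero 2 (hb i)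
  rw [hsplit, hvelocity, hnewton]
  simp only [PiLp.sub_apply, PiLp.single_apply, if_true, mul_one]
  rw [div_eq_iff hbi, add_mul, sub_mul, div_mul_cancel₀ _ hbi]
  constructor <;> intro h <;> linear_combination h

theorem euler_lagrange_iff_newton_system_of_diagonal_general
    (d : ℕ)
    (b : Fin d → ℝ) (hb : ∀ i, b i ≠ 0)
    (η : EuclideanSpace ℝ (Fin d))
    (f : EuclideanSpace ℝ (Fin d) → EuclideanSpace ℝ (Fin d))
    (hsym : ∀ (x : EuclideanSpace ℝ (Fin d)) (i j : Fin d),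
      fderiv ℝ f x (EuclideanSpace.single j 1) i / (b i) ^ 2
        = fderiv ℝ f x (EuclideanSpace.single i 1) j / (b j) ^ 2)
    (z : ℝ → EuclideanSpace ℝ (Fin d)) :
    (∀ t ∈ Set.Icc (0:ℝ) 1, ∀ i : Fin d,
      (inner ℝ (matMulVec (Matrix.diagonal b)⁻¹
            (deriv (deriv z) t - fderiv ℝ f (z t) (deriv z t)))
          (matMulVec (Matrix.diagonal b)⁻¹ (EuclideanSpace.single i 1)) : ℝ)
        = (inner ℝ (matMulVec (Matrix.diagonal b)⁻¹ (f (z t) - deriv z t - η))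
            (matMulVec (Matrix.diagonal b)⁻¹
              (fderiv ℝ f (z t) (EuclideanSpace.single i 1))) : ℝ)
          + (1 / 2) * ∑ j, fderiv ℝ
              (fun x => fderiv ℝ f x (EuclideanSpace.single j 1) j) (z t)
              (EuclideanSpace.single i 1))
    ↔ (∀ t ∈ Set.Icc (0:ℝ) 1, ∀ i : Fin d,
      deriv (deriv z) t i
        = (∑ j, ((b i) ^ 2 / (b j) ^ 2) * (f (z t) j - η j)
            * fderiv ℝ f (z t) (EuclideanSpace.single i 1) j)
          + ((b i) ^ 2 / 2) * ∑ j, fderiv ℝ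
              (fun x => fderiv ℝ f x (EuclideanSpace.single j 1) j) (z t)
              (EuclideanSpace.single i 1)) := by
  refine forall_congr' fun t => forall_congr' fun _ => forall_congr' fun i => ?_
  exact euler_lagrange_eq_iff_newton_eq hb _ (hsym (z t)) _ _ _ _ _ i

/-- Remark 3.3 of the paper: for a diagonal noise matrix `B = diag(b₁,…,b_d)` with the scaled
Jacobian `(B⁻¹)ᵀB⁻¹Df(x)` symmetric (i.e. `(∂fⁱ/∂xⱼ)/bᵢ² = (∂fʲ/∂xᵢ)/bⱼ²`), a `C²` curve `z`
satisfies the Euler–Lagrange equation of the Onsager–Machlup Lagrangian if and only if it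
satisfies the Newton system
`z̈ᵢ = Σⱼ (bᵢ²/bⱼ²)(fʲ(z) − ηⱼ) ∂fʲ/∂xᵢ(z) + (bᵢ²/2) Σⱼ ∂²fʲ/∂xᵢ∂xⱼ(z)`. -/
theorem euler_lagrange_iff_newton_system_of_diagonal
    (d : ℕ) (hd : 1 ≤ d)
    (b : Fin d → ℝ) (hb : ∀ i, b i ≠ 0)
    (η : EuclideanSpace ℝ (Fin d))
    (f : EuclideanSpace ℝ (Fin d) → EuclideanSpace ℝ (Fin d))
    (hf : ContDiff ℝ 2 f)
    (hsym : ∀ (x : EuclideanSpace ℝ (Fin d)) (i j : Fin d),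
      fderiv ℝ f x (EuclideanSpace.single j 1) i / (b i) ^ 2
        = fderiv ℝ f x (EuclideanSpace.single i 1) j / (b j) ^ 2)
    (z : ℝ → EuclideanSpace ℝ (Fin d))
    (hz : ContDiff ℝ 2 z) :
    (∀ t ∈ Set.Icc (0:ℝ) 1, ∀ i : Fin d,
      (inner ℝ (matMulVec (Matrix.diagonal b)⁻¹
            (deriv (deriv z) t - fderiv ℝ f (z t) (deriv z t)))
          (matMulVec (Matrix.diagonal b)⁻¹ (EuclideanSpace.single i 1)) : ℝ)
        = (inner ℝ (matMulVec (Matrix.diagonal b)⁻¹ (f (z t) - deriv z t - η))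
            (matMulVec (Matrix.diagonal b)⁻¹
              (fderiv ℝ f (z t) (EuclideanSpace.single i 1))) : ℝ)
          + (1 / 2) * ∑ j, fderiv ℝ
              (fun x => fderiv ℝ f x (EuclideanSpace.single j 1) j) (z t)
              (EuclideanSpace.single i 1))
    ↔ (∀ t ∈ Set.Icc (0:ℝ) 1, ∀ i : Fin d,
      deriv (deriv z) t i
        = (∑ j, ((b i) ^ 2 / (b j) ^ 2) * (f (z t) j - η j)
            * fderiv ℝ f (z t) (EuclideanSpace.single i 1) j)
          + ((b i) ^ 2 / 2) * ∑ j, fderiv ℝ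
              (fun x => fderiv ℝ f x (EuclideanSpace.single j 1) j) (z t)
              (EuclideanSpace.single i 1)) :=
  euler_lagrange_iff_newton_system_of_diagonal_general d b hb η f hsym z
end
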